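/- arXiv:2006.07599 — 2 statements merged into one kernel-verified Lean document; each statement's English description precedes it below -/
import Mathlib

section
/- Let η₁, η₂ ∈ ℂ with Re(η₁) > 0 and Re(η₂) > 0, let η₃ ∈ ℂ, let a₁ < a₂ be real numbers, and let x, y ∈ ℝ with a₁x + y > 0, a₂x + y > 0, and |(a₂−a₁)x| < a₁x + y. Then ∫_{a₁}^{a₂} (u−a₁)^{η₁−1} (a₂−u)^{η₂−1} (xu+y)^{η₃} du = B(η₁, η₂) · (a₂−a₁)^{η₁+η₂−1} (a₁x+y)^{η₃} · ₂F₁(−η₃, η₁; η₁+η₂; −(a₂−a₁)x/(a₁x+y)), where ₂F₁(a, b; c; w) = Σ_{r=0}^∞ (a)_r (b)_r w^r / ((c)_r r!) is the Gauss hypergeometric series. -/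
open Complex Polynomial

/-- The Gauss hypergeometric series `₂F₁(a, b; c; w)`. -/
noncomputable def gaussHyper (a b c w : ℂ) : ℂ :=
  ∑' r : ℕ, (ascPochhammer ℂ r).eval a * (ascPochhammer ℂ r).eval b * w ^ r
    / ((ascPochhammer ℂ r).eval c * (r.factorial : ℂ))

open MeasureTheory

noncomputable def binCoef (s : ℂ) (r : ℕ) : ℂ :=
  (ascPochhammer ℂ r).eval (-s) * (-1) ^ r / r.factorial

lemma binCoef_zero (s : ℂ) : binCoef s 0 = 1 := by simp [binCoef]

lemma binCoef_succ (s : ℂ) (r : ℕ) :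
    ((r : ℂ) + 1) * binCoef s (r + 1) = (s - r) * binCoef s r := by
  have hfac : ((r.factorial : ℂ)) ≠ 0 := by exact_mod_cast r.factorial_ne_zero
  have hr1 : ((r : ℂ) + 1) ≠ 0 := by
    exact_mod_cast (Nat.cast_add_one_ne_zero r (R := ℂ))
  have hf : (((r+1).factorial : ℂ)) = ((r : ℂ) + 1) * r.factorial := by
    rw [Nat.factorial_succ]; push_cast; ring
  rw [binCoef, binCoef, hf, ascPochhammer_succ_eval, pow_succ]
  field_simp
  ring

lemma binCoef_norm_succ (s : ℂ) (r : ℕ) :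
    ((r : ℝ) + 1) * ‖binCoef s (r + 1)‖ ≤ (‖s‖ + r) * ‖binCoef s r‖ := by
  have h : ‖((r : ℂ) + 1) * binCoef s (r + 1)‖ = ‖(s - r) * binCoef s r‖ := by
    rw [binCoef_succ]
  rw [norm_mul, norm_mul] at h
  have h1 : ‖((r : ℂ) + 1)‖ = (r : ℝ) + 1 := by
    rw [show ((r : ℂ) + 1) = ((r + 1 : ℕ) : ℂ) by push_cast; ring, Complex.norm_natCast]
    push_cast; ring
  rw [h1] at h
  rw [h]
  refine mul_le_mul_of_nonneg_right ((norm_sub_le _ _).trans_eq ?_) (norm_nonneg _)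
  rw [Complex.norm_natCast]

lemma binCoef_bound (s : ℂ) {ρ : ℝ} (h0 : 0 < ρ) (h1 : ρ < 1) :
    ∃ M : ℝ, ∀ r : ℕ, ‖binCoef s r‖ * ρ ^ r ≤ M := by
  set a : ℕ → ℝ := fun r => ‖binCoef s r‖ * ρ ^ r with ha
  set N : ℕ := ⌈ρ * ‖s‖ / (1 - ρ)⌉₊ with hN
  have hstep : ∀ r : ℕ, N ≤ r → a (r + 1) ≤ a r := by
    intro r hr
    have hkey : ρ * (‖s‖ + r) ≤ r + 1 := by
      have h2 : ρ * ‖s‖ / (1 - ρ) ≤ (N : ℝ) := Nat.le_ceil _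
      have h3 : ρ * ‖s‖ ≤ (1 - ρ) * N := by
        rw [div_le_iff₀ (by linarith)] at h2; linarith
      have h4 : (N : ℝ) ≤ r := by exact_mod_cast hr
      nlinarith
    have hmul : ((r : ℝ) + 1) * a (r + 1) ≤ ((r : ℝ) + 1) * a r := by
      have e1 : ((r : ℝ) + 1) * a (r + 1)
          = (((r : ℝ) + 1) * ‖binCoef s (r + 1)‖) * ρ ^ r * ρ := by
        simp only [ha, pow_succ]; ring
      have e2 := binCoef_norm_succ s r
      calc ((r : ℝ) + 1) * a (r + 1)
          = (((r : ℝ) + 1) * ‖binCoef s (r + 1)‖) * ρ ^ r * ρ := e1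
        _ ≤ ((‖s‖ + r) * ‖binCoef s r‖) * ρ ^ r * ρ := by
            have hp : (0:ℝ) ≤ ρ ^ r * ρ := by positivity
            nlinarith [pow_nonneg h0.le r, mul_le_mul_of_nonneg_right e2 hp]
        _ = (ρ * (‖s‖ + r)) * (‖binCoef s r‖ * ρ ^ r) := by ring
        _ ≤ ((r : ℝ) + 1) * a r := by
            refine mul_le_mul_of_nonneg_right hkey (by positivity) |>.trans_eq rfl
    exact le_of_mul_le_mul_left hmul (by positivity)
  have hanti : ∀ k : ℕ, a (N + k) ≤ a N := by
    intro k
    induction k with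
    | zero => simp
    | succ k ih => exact (hstep (N + k) (Nat.le_add_right _ _)).trans ih
  refine ⟨∑ i ∈ Finset.range (N + 1), a i, fun r => ?_⟩
  have hnn : ∀ i ∈ Finset.range (N + 1), 0 ≤ a i := fun i _ => by positivity
  rcases le_or_gt r N with h | h
  · exact Finset.single_le_sum hnn (Finset.mem_range.mpr (Nat.lt_succ_of_le h))
  · have : a r ≤ a N := by
      obtain ⟨k, rfl⟩ := Nat.exists_eq_add_of_le h.le
      exact hanti k
    exact this.trans (Finset.single_le_sum hnn (Finset.mem_range.mpr (Nat.lt_succ_self N)))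

lemma binCoef_summable (s : ℂ) {ρ : ℝ} (h0 : 0 ≤ ρ) (h1 : ρ < 1) :
    Summable (fun r : ℕ => ((r : ℝ) + 1) * ‖binCoef s r‖ * ρ ^ r) := by
  set ρ' : ℝ := (1 + ρ) / 2 with hρ'
  have hρ'0 : 0 < ρ' := by rw [hρ']; linarith
  have hρ'1 : ρ' < 1 := by rw [hρ']; linarith
  have hρρ' : ρ < ρ' := by rw [hρ']; linarith
  obtain ⟨M, hM⟩ := binCoef_bound s hρ'0 hρ'1
  set q : ℝ := ρ / ρ' with hq
  have hq0 : 0 ≤ q := by positivity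
  have hq1 : q < 1 := by rw [hq, div_lt_one hρ'0]; exact hρρ'
  have hgeo : Summable (fun r : ℕ => ((r : ℝ) + 1) * q ^ r) := by
    have h1' : Summable (fun r : ℕ => (r : ℝ) ^ 1 * q ^ r) :=
      summable_pow_mul_geometric_of_norm_lt_one 1 (by rwa [Real.norm_eq_abs, _root_.abs_of_nonneg hq0])
    have h2' : Summable (fun r : ℕ => q ^ r) := summable_geometric_of_lt_one hq0 hq1
    simpa [add_mul, pow_one] using h1'.add h2'
  refine Summable.of_nonneg_of_le (fun r => by positivity)
    (fun r => ?_) (hgeo.mul_left M)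
  have e : ρ ^ r = ρ' ^ r * q ^ r := by
    have : ρ' ≠ 0 := ne_of_gt hρ'0
    rw [hq, ← mul_pow]; congr 1; field_simp
  calc ((r : ℝ) + 1) * ‖binCoef s r‖ * ρ ^ r
      = ((r : ℝ) + 1) * ((‖binCoef s r‖ * ρ' ^ r) * q ^ r) := by rw [e]; ring
    _ ≤ ((r : ℝ) + 1) * (M * q ^ r) := by
        have := hM r
        have hb : (0:ℝ) ≤ q ^ r := by positivity
        nlinarith [mul_le_mul_of_nonneg_right (hM r) hb]
    _ = M * (((r : ℝ) + 1) * q ^ r) := by ring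

lemma binCoef_mul_summable (s : ℂ) (w : ℂ) (hw : ‖w‖ < 1) :
    Summable (fun r : ℕ => binCoef s r * w ^ r) := by
  refine Summable.of_norm_bounded (binCoef_summable s (norm_nonneg w) hw) (fun r => ?_)
  rw [norm_mul, norm_pow]
  nlinarith [mul_nonneg (norm_nonneg (binCoef s r)) (pow_nonneg (norm_nonneg w) r),
    Nat.cast_nonneg (α := ℝ) r]

lemma hasSum_binomial (s : ℂ) (v : ℝ) (hv : |v| < 1) :
    HasSum (fun r : ℕ => binCoef s r * (v : ℂ) ^ r) (((1 + v : ℝ) : ℂ) ^ s) := by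
  set ρ : ℝ := (1 + |v|) / 2 with hρdef
  have hv0 : 0 ≤ |v| := abs_nonneg v
  have hρ0 : 0 < ρ := by rw [hρdef]; linarith
  have hρ1 : ρ < 1 := by rw [hρdef]; linarith
  have hvρ : |v| < ρ := by rw [hρdef]; linarith
  set T : Set ℝ := Set.Ioo (-ρ) ρ with hTdef
  have hT : IsOpen T := isOpen_Ioo
  have hTc : IsPreconnected T := (convex_Ioo _ _).isPreconnected
  have h0T : (0:ℝ) ∈ T := Set.mem_Ioo.mpr ⟨by linarith, hρ0⟩
  have hvT : v ∈ T := by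
    obtain ⟨h1', h2'⟩ := abs_lt.mp hvρ; exact ⟨h1', h2'⟩
  set f : ℝ → ℂ := fun t => ∑' r : ℕ, binCoef s r * ((t : ℂ)) ^ r with hfdef
  set g' : ℕ → ℝ → ℂ := fun r t => binCoef s r * ((r : ℂ) * ((t : ℂ)) ^ (r - 1)) with hg'def
  set u : ℕ → ℝ := fun r => ((r : ℝ) + 1) * ‖binCoef s r‖ * ρ ^ r / ρ with hudef
  have hu : Summable u := (binCoef_summable s hρ0.le hρ1).div_const ρ
  have hgderiv : ∀ (r : ℕ) (t : ℝ),
      HasDerivAt (fun t : ℝ => binCoef s r * ((t : ℂ)) ^ r) (g' r t) t := by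
    intro r t
    exact ((hasDerivAt_pow r ((t : ℝ) : ℂ)).comp_ofReal).const_mul (binCoef s r)
  have hbound : ∀ (r : ℕ) (t : ℝ), t ∈ T → ‖g' r t‖ ≤ u r := by
    intro r t ht
    have htρ : |t| ≤ ρ := le_of_lt (abs_lt.mpr ⟨ht.1, ht.2⟩)
    cases r with
    | zero => simp [hg'def, hudef]; positivity
    | succ k =>
      have : ‖g' (k+1) t‖ = ‖binCoef s (k+1)‖ * (((k:ℝ) + 1) * |t| ^ k) := by
        simp only [hg'def]
        rw [norm_mul, norm_mul, norm_pow, Complex.norm_natCast]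
        push_cast
        simp
      rw [this]
      have hu1 : u (k+1) = ((k : ℝ) + 2) * ‖binCoef s (k+1)‖ * ρ ^ k := by
        simp only [hudef]
        rw [pow_succ]
        field_simp
        push_cast
        ring
      rw [hu1]
      have h1' : |t| ^ k ≤ ρ ^ k := pow_le_pow_left₀ (abs_nonneg t) htρ k
      calc ‖binCoef s (k+1)‖ * (((k:ℝ) + 1) * |t| ^ k)
          ≤ ‖binCoef s (k+1)‖ * (((k:ℝ) + 1) * ρ ^ k) := by gcongr
        _ = ((k:ℝ) + 1) * ‖binCoef s (k+1)‖ * ρ ^ k := by ring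
        _ ≤ ((k:ℝ) + 2) * ‖binCoef s (k+1)‖ * ρ ^ k := by gcongr ?_ * _ * _; linarith
  have hg0 : Summable (fun r : ℕ => binCoef s r * (((0:ℝ) : ℂ)) ^ r) := by
    apply summable_of_ne_finset_zero (s := {0})
    intro r hr
    have : r ≠ 0 := by simpa using hr
    simp [zero_pow this]
  have hf_deriv : ∀ t ∈ T, HasDerivAt f (∑' r : ℕ, g' r t) t := by
    intro t ht
    exact hasDerivAt_tsum_of_isPreconnected hu hT hTc (fun r y _ => hgderiv r y)
      hbound h0T hg0 ht
  -- summability helpers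
  have habs : ∀ t : ℝ, t ∈ T → |t| < 1 := by
    intro t ht; exact lt_trans (abs_lt.mpr ⟨ht.1, ht.2⟩) hρ1
  have key : ∀ t ∈ T, ((1 + t : ℝ) : ℂ) * (∑' r : ℕ, g' r t) = s * f t := by
    intro t ht
    have ht1 : |t| < 1 := habs t ht
    have hnt : ‖((t:ℝ):ℂ)‖ < 1 := by rwa [Complex.norm_real, Real.norm_eq_abs]
    have S0 : Summable (fun r : ℕ => binCoef s r * ((t:ℂ)) ^ r) :=
      binCoef_mul_summable s _ hnt
    have SD : Summable (fun r : ℕ => g' r t) :=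
      Summable.of_norm_bounded hu (fun r => hbound r t ht)
    have SD' : Summable (fun r : ℕ => binCoef s r * (r : ℂ) * ((t:ℂ)) ^ r) := by
      refine Summable.of_norm_bounded (binCoef_summable s (abs_nonneg t) ht1) (fun r => ?_)
      rw [norm_mul, norm_mul, Complex.norm_natCast, norm_pow, Complex.norm_real,
        Real.norm_eq_abs]
      nlinarith [norm_nonneg (binCoef s r), pow_nonneg (abs_nonneg t) r]
    have SS : Summable (fun r : ℕ => (s - r) * binCoef s r * ((t:ℂ)) ^ r) := by
      refine Summable.of_norm_bounded
        (((binCoef_summable s (abs_nonneg t) ht1)).mul_left (‖s‖ + 1)) (fun r => ?_)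
      rw [norm_mul, norm_mul, norm_pow, Complex.norm_real, Real.norm_eq_abs]
      have h1' : ‖s - (r:ℂ)‖ ≤ ‖s‖ + r := by
        refine (norm_sub_le _ _).trans ?_
        rw [Complex.norm_natCast]
      have h2' : ‖s‖ + (r:ℝ) ≤ (‖s‖ + 1) * ((r:ℝ) + 1) := by nlinarith [norm_nonneg s]
      calc ‖s - (r:ℂ)‖ * ‖binCoef s r‖ * |t| ^ r
          ≤ ((‖s‖ + 1) * ((r:ℝ) + 1)) * ‖binCoef s r‖ * |t| ^ r :=
            mul_le_mul_of_nonneg_right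
              (mul_le_mul_of_nonneg_right (h1'.trans h2') (norm_nonneg _))
              (pow_nonneg (abs_nonneg t) r)
        _ = (‖s‖ + 1) * (((r:ℝ) + 1) * ‖binCoef s r‖ * |t| ^ r) := by ring
    have hD : (∑' r : ℕ, g' r t) = ∑' r : ℕ, (s - r) * binCoef s r * ((t:ℂ)) ^ r := by
      rw [SD.tsum_eq_zero_add]
      have hz : g' 0 t = 0 := by simp [hg'def]
      rw [hz, zero_add]
      refine tsum_congr (fun r => ?_)
      have : g' (r+1) t = (((r:ℂ) + 1) * binCoef s (r+1)) * ((t:ℂ)) ^ r := by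
        simp only [hg'def]
        push_cast
        ring_nf
      rw [this, binCoef_succ]
    have hTD : ((t:ℝ):ℂ) * (∑' r : ℕ, g' r t) = ∑' r : ℕ, binCoef s r * (r:ℂ) * ((t:ℂ)) ^ r := by
      rw [← tsum_mul_left]
      refine tsum_congr (fun r => ?_)
      cases r with
      | zero => simp [hg'def]
      | succ k =>
        simp only [hg'def, Nat.add_sub_cancel]
        push_cast
        rw [pow_succ]
        ring
    have expand : ((1 + t : ℝ) : ℂ) = 1 + ((t:ℝ):ℂ) := by push_cast; ring
    rw [expand, add_mul, one_mul, hTD, hD, ← SS.tsum_add SD']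
    have : (fun r : ℕ => (s - r) * binCoef s r * ((t:ℂ)) ^ r
        + binCoef s r * (r:ℂ) * ((t:ℂ)) ^ r)
        = fun r : ℕ => s * (binCoef s r * ((t:ℂ)) ^ r) := by
      funext r; ring
    rw [this, tsum_mul_left]
  -- the auxiliary function F
  set F : ℝ → ℂ := fun t => f t * ((1 + t : ℝ) : ℂ) ^ (-s) with hFdef
  have hFderiv : ∀ t ∈ T, HasDerivAt F 0 t := by
    intro t ht
    have ht1 : |t| < 1 := habs t ht
    have hpos : (0:ℝ) < 1 + t := by
      have := abs_lt.mp ht1; linarith [this.1]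
    have hne : ((1 + t : ℝ) : ℂ) ≠ 0 := by
      exact_mod_cast Complex.ofReal_ne_zero.mpr hpos.ne'
    have hslit : ((1 + t : ℝ) : ℂ) ∈ Complex.slitPlane := ofReal_mem_slitPlane.2 hpos
    have hb : HasDerivAt (fun y : ℝ => ((1 + y : ℝ) : ℂ)) 1 t := by
      have h1' : HasDerivAt (fun y : ℝ => (1 + y : ℝ)) 1 t := (hasDerivAt_id t).const_add 1
      simpa using h1'.ofReal_comp
    have hc : HasDerivAt (fun w : ℂ => (1 + w) ^ (-s))
        (-s * (1 + (t:ℂ)) ^ (-s - 1) * 1) (t:ℂ) := by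
      refine HasDerivAt.cpow_const ?_ ?_
      · simpa using (hasDerivAt_id ((t:ℂ))).const_add 1
      · simpa [Complex.ofReal_add] using hslit
    have hcp : HasDerivAt (fun y : ℝ => ((1 + y : ℝ) : ℂ) ^ (-s))
        (-s * ((1 + t : ℝ) : ℂ) ^ (-s - 1) * 1) t := by
      have := hc.comp_ofReal
      simpa [Complex.ofReal_add] using this
    have hprod := (hf_deriv t ht).mul hcp
    have heq : (∑' r : ℕ, g' r t) * ((1 + t : ℝ) : ℂ) ^ (-s)
        + f t * (-s * ((1 + t : ℝ) : ℂ) ^ (-s - 1) * 1) = 0 := by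
      have hsplit : ((1 + t : ℝ) : ℂ) ^ (-s)
          = ((1 + t : ℝ) : ℂ) ^ (-s - 1) * ((1 + t : ℝ) : ℂ) := by
        conv_lhs => rw [show -s = (-s - 1) + 1 by ring]
        rw [Complex.cpow_add _ _ hne, Complex.cpow_one]
      rw [hsplit]
      have := key t ht
      calc (∑' r : ℕ, g' r t) * (((1 + t : ℝ) : ℂ) ^ (-s - 1) * ((1 + t : ℝ) : ℂ))
            + f t * (-s * ((1 + t : ℝ) : ℂ) ^ (-s - 1) * 1)
          = ((1 + t : ℝ) : ℂ) ^ (-s - 1)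
            * (((1 + t : ℝ) : ℂ) * (∑' r : ℕ, g' r t) - s * f t) := by ring
        _ = 0 := by rw [this]; ring
    rw [← heq]
    exact hprod
  have hconst : F v = F 0 := by
    refine Convex.is_const_of_fderivWithin_eq_zero (𝕜 := ℝ) (convex_Ioo (-ρ) ρ)
      (fun t ht => (hFderiv t ht).differentiableAt.differentiableWithinAt) ?_ hvT h0T
    intro t ht
    rw [fderivWithin_of_isOpen hT ht]
    have := (hFderiv t ht).hasFDerivAt.fderiv
    rw [this]
    ext w
    simp
  have hF0 : F 0 = 1 := by
    have hf0 : f 0 = 1 := by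
      rw [hfdef]
      simp only
      rw [tsum_eq_single 0 (fun r hr => by simp [zero_pow hr])]
      simp [binCoef_zero]
    simp [hFdef, hf0]
  have h1v : (0:ℝ) < 1 + v := by
    have := abs_lt.mp hv; linarith [this.1]
  have hne : ((1 + v : ℝ) : ℂ) ≠ 0 := by
    exact_mod_cast Complex.ofReal_ne_zero.mpr h1v.ne'
  have hfv : f v = ((1 + v : ℝ) : ℂ) ^ s := by
    have hFv : F v = 1 := hconst.trans hF0
    have : f v * (((1 + v : ℝ) : ℂ) ^ (-s) * ((1 + v : ℝ) : ℂ) ^ s)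
        = ((1 + v : ℝ) : ℂ) ^ s := by
      rw [hFdef] at hFv
      simp only at hFv
      calc f v * (((1 + v : ℝ) : ℂ) ^ (-s) * ((1 + v : ℝ) : ℂ) ^ s)
          = (f v * ((1 + v : ℝ) : ℂ) ^ (-s)) * ((1 + v : ℝ) : ℂ) ^ s := by ring
        _ = ((1 + v : ℝ) : ℂ) ^ s := by rw [hFv, one_mul]
    rwa [← Complex.cpow_add _ _ hne, neg_add_cancel, Complex.cpow_zero, mul_one] at this
  have hnv : ‖((v:ℝ):ℂ)‖ < 1 := by rwa [Complex.norm_real, Real.norm_eq_abs]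
  have := (binCoef_mul_summable s ((v:ℝ):ℂ) hnv).hasSum
  rwa [show (∑' r : ℕ, binCoef s r * ((v:ℝ):ℂ) ^ r) = f v from rfl, hfv] at this

lemma binCoef_norm_summable (s : ℂ) {ρ : ℝ} (h0 : 0 ≤ ρ) (h1 : ρ < 1) :
    Summable (fun r : ℕ => ‖binCoef s r‖ * ρ ^ r) := by
  refine Summable.of_nonneg_of_le (fun r => by positivity) (fun r => ?_)
    (binCoef_summable s h0 h1)
  nlinarith [mul_nonneg (norm_nonneg (binCoef s r)) (pow_nonneg h0 r),
    Nat.cast_nonneg (α := ℝ) r]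

lemma Gamma_nat_shift (s : ℂ) (hs : 0 < s.re) (n : ℕ) :
    Complex.Gamma (s + n) = Complex.Gamma s * (ascPochhammer ℂ n).eval s := by
  induction n with
  | zero => simp
  | succ n ih =>
    have hne : s + (n : ℂ) ≠ 0 := by
      intro h
      have : (s + (n : ℂ)).re = 0 := by rw [h]; simp
      rw [Complex.add_re, Complex.natCast_re] at this
      nlinarith [Nat.cast_nonneg (α := ℝ) n]
    have h1 : ((n + 1 : ℕ) : ℂ) = (n : ℂ) + 1 := by push_cast; ring
    rw [h1, show s + ((n:ℂ) + 1) = (s + n) + 1 by ring, Complex.Gamma_add_one _ hne, ih,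
      ascPochhammer_succ_eval]
    ring

lemma poch_ne_zero (s : ℂ) (hs : 0 < s.re) (n : ℕ) :
    (ascPochhammer ℂ n).eval s ≠ 0 := by
  have hre : 0 < (s + (n : ℂ)).re := by
    rw [Complex.add_re, Complex.natCast_re]
    have := Nat.cast_nonneg (α := ℝ) n
    linarith
  have h := Gamma_nat_shift s hs n
  have h2 : Complex.Gamma (s + n) ≠ 0 := Complex.Gamma_ne_zero_of_re_pos hre
  rw [h] at h2
  exact fun hc => h2 (by rw [hc, mul_zero])

lemma core_integral (η₁ η₂ η₃ : ℂ) (hη₁ : 0 < η₁.re) (hη₂ : 0 < η₂.re)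
    (z : ℝ) (hz : |z| < 1) :
    (∫ t in (0:ℝ)..1, ((t : ℝ) : ℂ) ^ (η₁ - 1) * ((1 - t : ℝ) : ℂ) ^ (η₂ - 1)
        * ((1 + z * t : ℝ) : ℂ) ^ η₃)
    = (Complex.Gamma η₁ * Complex.Gamma η₂ / Complex.Gamma (η₁ + η₂)) *
      ∑' r : ℕ, (ascPochhammer ℂ r).eval (-η₃) * (ascPochhammer ℂ r).eval η₁
        * ((-z : ℝ) : ℂ) ^ r
        / ((ascPochhammer ℂ r).eval (η₁ + η₂) * (r.factorial : ℂ)) := by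
  set G : ℕ → ℝ → ℂ := fun r t => binCoef η₃ r * (z : ℂ) ^ r
    * ((t : ℝ) : ℂ) ^ (η₁ - 1 + r) * ((1 - t : ℝ) : ℂ) ^ (η₂ - 1) with hGdef
  -- integrability of each G r
  have hre : ∀ r : ℕ, 0 < (η₁ + (r : ℂ)).re := by
    intro r
    rw [Complex.add_re, Complex.natCast_re]
    have := Nat.cast_nonneg (α := ℝ) r
    linarith
  have hbetaInt : ∀ r : ℕ, IntegrableOn
      (fun t : ℝ => ((t : ℝ) : ℂ) ^ (η₁ - 1 + r) * ((1 - t : ℝ) : ℂ) ^ (η₂ - 1))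
      (Set.Ioc (0:ℝ) 1) := by
    intro r
    have h : IntegrableOn (fun x : ℝ => ((x:ℂ)) ^ (η₁ + r - 1) * (1 - (x:ℂ)) ^ (η₂ - 1))
        (Set.Ioc (0:ℝ) 1) := (Complex.betaIntegral_convergent (hre r) hη₂).1
    refine h.congr_fun ?_ measurableSet_Ioc
    intro t _
    rw [show η₁ + (r : ℂ) - 1 = η₁ - 1 + r from by ring]
    congr 2
    push_cast
    ring
  have hInt : ∀ r : ℕ, IntegrableOn (G r) (Set.Ioc (0:ℝ) 1) := by
    intro r
    have h2 : IntegrableOn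
        (fun t : ℝ => (binCoef η₃ r * (z : ℂ) ^ r)
          * (((t : ℝ) : ℂ) ^ (η₁ - 1 + r) * ((1 - t : ℝ) : ℂ) ^ (η₂ - 1)))
        (Set.Ioc (0:ℝ) 1) := (hbetaInt r).const_mul (binCoef η₃ r * (z : ℂ) ^ r)
    refine h2.congr_fun ?_ measurableSet_Ioc
    intro t _
    simp only [hGdef]
    ring
  -- the norm bound function
  set B : ℝ → ℝ := fun t => ‖((t : ℝ) : ℂ) ^ (η₁ - 1) * ((1 - t : ℝ) : ℂ) ^ (η₂ - 1)‖
    with hBdef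
  have hBInt : IntegrableOn B (Set.Ioc (0:ℝ) 1) := by
    have h : IntegrableOn (fun x : ℝ => ‖((x:ℂ)) ^ (η₁ - 1) * (1 - (x:ℂ)) ^ (η₂ - 1)‖)
        (Set.Ioc (0:ℝ) 1) := (Complex.betaIntegral_convergent hη₁ hη₂).1.norm
    refine h.congr_fun ?_ measurableSet_Ioc
    intro t _
    simp only [hBdef]
    congr 3
    push_cast
    ring
  have hKnn : (0:ℝ) ≤ ∫ t in Set.Ioc (0:ℝ) 1, B t :=
    setIntegral_nonneg measurableSet_Ioc (fun t _ => norm_nonneg _)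
  -- pointwise bound
  have hGbound : ∀ (r : ℕ), ∀ t ∈ Set.Ioc (0:ℝ) 1,
      ‖G r t‖ ≤ (‖binCoef η₃ r‖ * |z| ^ r) * B t := by
    intro r t ht
    have ht0 : (0:ℝ) < t := ht.1
    have htne : ((t : ℝ) : ℂ) ≠ 0 := Complex.ofReal_ne_zero.mpr ht0.ne'
    have hsplit : ((t : ℝ) : ℂ) ^ (η₁ - 1 + r)
        = ((t : ℝ) : ℂ) ^ (η₁ - 1) * ((t : ℝ) : ℂ) ^ (r : ℕ) := by
      rw [Complex.cpow_add _ _ htne, Complex.cpow_natCast]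
    have : G r t = (binCoef η₃ r * (z : ℂ) ^ r * ((t : ℝ) : ℂ) ^ (r : ℕ))
        * (((t : ℝ) : ℂ) ^ (η₁ - 1) * ((1 - t : ℝ) : ℂ) ^ (η₂ - 1)) := by
      simp only [hGdef]; rw [hsplit]; ring
    rw [this, norm_mul]
    have h1 : ‖binCoef η₃ r * (z : ℂ) ^ r * ((t : ℝ) : ℂ) ^ (r : ℕ)‖
        ≤ ‖binCoef η₃ r‖ * |z| ^ r := by
      rw [norm_mul, norm_mul, norm_pow, norm_pow, Complex.norm_real, Complex.norm_real,
        Real.norm_eq_abs, Real.norm_eq_abs]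
      have ht1 : |t| ^ r ≤ 1 := by
        refine pow_le_one₀ (abs_nonneg t) ?_
        rw [abs_of_pos ht0]; exact ht.2
      nlinarith [mul_nonneg (norm_nonneg (binCoef η₃ r)) (pow_nonneg (abs_nonneg z) r),
        pow_nonneg (abs_nonneg t) r]
    exact mul_le_mul_of_nonneg_right h1 (norm_nonneg _) |>.trans_eq rfl
  -- summability of integrals of norms
  have hSum : Summable (fun r : ℕ => ∫ t in Set.Ioc (0:ℝ) 1, ‖G r t‖) := by
    refine Summable.of_nonneg_of_le
      (fun r => setIntegral_nonneg measurableSet_Ioc (fun t _ => norm_nonneg _))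
      (fun r => ?_)
      (((binCoef_norm_summable η₃ (abs_nonneg z) hz)).mul_right
        (∫ t in Set.Ioc (0:ℝ) 1, B t))
    calc (∫ t in Set.Ioc (0:ℝ) 1, ‖G r t‖)
        ≤ ∫ t in Set.Ioc (0:ℝ) 1, (‖binCoef η₃ r‖ * |z| ^ r) * B t := by
          refine setIntegral_mono_on ((hInt r).norm) (hBInt.const_mul _)
            measurableSet_Ioc (hGbound r)
      _ = ‖binCoef η₃ r‖ * |z| ^ r * ∫ t in Set.Ioc (0:ℝ) 1, B t := by
          rw [integral_const_mul]
  -- pointwise expansion of the integrand into the series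
  have hpt : ∀ t ∈ Set.Ioc (0:ℝ) 1,
      ((t : ℝ) : ℂ) ^ (η₁ - 1) * ((1 - t : ℝ) : ℂ) ^ (η₂ - 1) * ((1 + z * t : ℝ) : ℂ) ^ η₃
      = ∑' r : ℕ, G r t := by
    intro t ht
    have ht0 : (0:ℝ) < t := ht.1
    have htne : ((t : ℝ) : ℂ) ≠ 0 := Complex.ofReal_ne_zero.mpr ht0.ne'
    have hzt : |z * t| < 1 := by
      rw [abs_mul, abs_of_pos ht0]
      calc |z| * t ≤ |z| * 1 := by nlinarith [abs_nonneg z, ht.2]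
        _ < 1 := by rwa [mul_one]
    have hS := (hasSum_binomial η₃ (z * t) hzt).mul_left
      (((t : ℝ) : ℂ) ^ (η₁ - 1) * ((1 - t : ℝ) : ℂ) ^ (η₂ - 1))
    have hfun : (fun r : ℕ => (((t : ℝ) : ℂ) ^ (η₁ - 1) * ((1 - t : ℝ) : ℂ) ^ (η₂ - 1))
        * (binCoef η₃ r * ((z * t : ℝ) : ℂ) ^ r)) = fun r : ℕ => G r t := by
      funext r
      simp only [hGdef]
      rw [show ((z * t : ℝ) : ℂ) = (z : ℂ) * ((t : ℝ) : ℂ) from by push_cast; ring, mul_pow,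
        Complex.cpow_add _ _ htne, Complex.cpow_natCast]
      ring
    rw [hfun] at hS
    exact hS.tsum_eq.symm
  -- main computation
  rw [intervalIntegral.integral_of_le zero_le_one,
    setIntegral_congr_fun measurableSet_Ioc hpt,
    ← MeasureTheory.integral_tsum_of_summable_integral_norm hInt hSum]
  -- evaluate each integral
  have hval : ∀ r : ℕ, (∫ t in Set.Ioc (0:ℝ) 1, G r t)
      = binCoef η₃ r * (z : ℂ) ^ r * Complex.betaIntegral (η₁ + r) η₂ := by
    intro r
    have h1 : (∫ t in Set.Ioc (0:ℝ) 1, G r t)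
        = binCoef η₃ r * (z : ℂ) ^ r
          * ∫ t in Set.Ioc (0:ℝ) 1,
              ((t : ℝ) : ℂ) ^ (η₁ - 1 + r) * ((1 - t : ℝ) : ℂ) ^ (η₂ - 1) := by
      rw [← integral_const_mul]
      refine setIntegral_congr_fun measurableSet_Ioc (fun t _ => ?_)
      simp only [hGdef]; ring
    rw [h1]
    congr 1
    rw [Complex.betaIntegral, intervalIntegral.integral_of_le zero_le_one]
    refine setIntegral_congr_fun measurableSet_Ioc (fun t _ => ?_)
    rw [show η₁ + (r : ℂ) - 1 = η₁ - 1 + r from by ring]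
    congr 2
    push_cast
    ring
  -- rewrite the sum
  have hΓ12 : Complex.Gamma (η₁ + η₂) ≠ 0 :=
    Complex.Gamma_ne_zero_of_re_pos (by rw [Complex.add_re]; linarith)
  have hterm : ∀ r : ℕ, (∫ t in Set.Ioc (0:ℝ) 1, G r t)
      = (Complex.Gamma η₁ * Complex.Gamma η₂ / Complex.Gamma (η₁ + η₂))
        * ((ascPochhammer ℂ r).eval (-η₃) * (ascPochhammer ℂ r).eval η₁
          * ((-z : ℝ) : ℂ) ^ r
          / ((ascPochhammer ℂ r).eval (η₁ + η₂) * (r.factorial : ℂ))) := by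
    intro r
    rw [hval r]
    have hre12 : 0 < (η₁ + η₂).re := by rw [Complex.add_re]; linarith
    have hbeta : Complex.betaIntegral (η₁ + r) η₂
        = Complex.Gamma (η₁ + r) * Complex.Gamma η₂ / Complex.Gamma (η₁ + r + η₂) := by
      have h := Complex.Gamma_mul_Gamma_eq_betaIntegral (hre r) hη₂
      have hne : Complex.Gamma (η₁ + r + η₂) ≠ 0 := by
        refine Complex.Gamma_ne_zero_of_re_pos ?_
        rw [Complex.add_re, Complex.add_re, Complex.natCast_re]
        have := Nat.cast_nonneg (α := ℝ) r
        linarith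
      field_simp
      linear_combination -h
    rw [hbeta, show η₁ + (r : ℂ) + η₂ = (η₁ + η₂) + r from by ring,
      Gamma_nat_shift (η₁ + η₂) hre12 r, Gamma_nat_shift η₁ hη₁ r]
    have hpoch : (ascPochhammer ℂ r).eval (η₁ + η₂) ≠ 0 := poch_ne_zero _ hre12 r
    have hfac : ((r.factorial : ℂ)) ≠ 0 := by exact_mod_cast r.factorial_ne_zero
    have hnegz : ((-z : ℝ) : ℂ) ^ r = (-1) ^ r * (z : ℂ) ^ r := by
      push_cast
      rw [show -(z:ℂ) = (-1) * (z:ℂ) from by ring, mul_pow]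
    rw [binCoef, hnegz]
    field_simp
  calc ∑' r : ℕ, (∫ t in Set.Ioc (0:ℝ) 1, G r t)
      = ∑' r : ℕ, (Complex.Gamma η₁ * Complex.Gamma η₂ / Complex.Gamma (η₁ + η₂))
        * ((ascPochhammer ℂ r).eval (-η₃) * (ascPochhammer ℂ r).eval η₁
          * ((-z : ℝ) : ℂ) ^ r
          / ((ascPochhammer ℂ r).eval (η₁ + η₂) * (r.factorial : ℂ))) :=
        tsum_congr hterm
    _ = _ := tsum_mul_left

/-- Euler-type integral of `(xu+y)^{η₃}` over `(a₁,a₂)` evaluated as a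
Gauss hypergeometric function. -/
theorem integral_linear_power_gauss (η₁ η₂ η₃ : ℂ)
    (hη₁ : 0 < η₁.re) (hη₂ : 0 < η₂.re)
    (a₁ a₂ x y : ℝ) (ha : a₁ < a₂)
    (h1 : 0 < a₁ * x + y) (h2 : 0 < a₂ * x + y)
    (h3 : |(a₂ - a₁) * x| < a₁ * x + y) :
    (∫ u in a₁..a₂, ((u - a₁ : ℝ) : ℂ) ^ (η₁ - 1) * ((a₂ - u : ℝ) : ℂ) ^ (η₂ - 1)
        * ((x * u + y : ℝ) : ℂ) ^ η₃)
    = (Complex.Gamma η₁ * Complex.Gamma η₂ / Complex.Gamma (η₁ + η₂))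
      * ((a₂ - a₁ : ℝ) : ℂ) ^ (η₁ + η₂ - 1) * ((a₁ * x + y : ℝ) : ℂ) ^ η₃
      * gaussHyper (-η₃) η₁ (η₁ + η₂) ((-(((a₂ - a₁) * x) / (a₁ * x + y)) : ℝ) : ℂ) := by
  set c : ℝ := a₂ - a₁ with hc
  set p : ℝ := a₁ * x + y with hp
  have hc0 : 0 < c := sub_pos.mpr ha
  set z : ℝ := c * x / p with hz
  have hpz : p * z = c * x := by
    rw [hz]; field_simp
  have hzabs : |z| < 1 := by
    rw [hz, abs_div, abs_of_pos h1, div_lt_one h1]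
    exact h3
  set f : ℝ → ℂ := fun u => ((u - a₁ : ℝ) : ℂ) ^ (η₁ - 1) * ((a₂ - u : ℝ) : ℂ) ^ (η₂ - 1)
    * ((x * u + y : ℝ) : ℂ) ^ η₃ with hf
  have hsub : (∫ u in a₁..a₂, f u) = c • ∫ t in (0:ℝ)..1, f (c * t + a₁) := by
    rw [intervalIntegral.smul_integral_comp_mul_add f c a₁]
    have e0 : c * 0 + a₁ = a₁ := by ring
    have e1 : c * 1 + a₁ = a₂ := by rw [hc]; ring
    rw [e0, e1]
  rw [hsub]
  set K : ℂ := (c : ℂ) ^ (η₁ - 1) * ((c : ℂ) ^ (η₂ - 1) * ((p : ℝ) : ℂ) ^ η₃) with hK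
  have hcongr : (∫ t in (0:ℝ)..1, f (c * t + a₁))
      = ∫ t in (0:ℝ)..1, K * (((t : ℝ) : ℂ) ^ (η₁ - 1) * ((1 - t : ℝ) : ℂ) ^ (η₂ - 1)
          * ((1 + z * t : ℝ) : ℂ) ^ η₃) := by
    refine intervalIntegral.integral_congr ?_
    intro t ht
    rw [Set.uIcc_of_le zero_le_one] at ht
    have ht0 : 0 ≤ t := ht.1
    have ht1 : t ≤ 1 := ht.2
    have h1t : 0 ≤ 1 - t := by linarith
    have hzt1 : |z * t| < 1 := by
      rw [abs_mul, _root_.abs_of_nonneg ht0]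
      calc |z| * t ≤ |z| * 1 := by nlinarith [abs_nonneg z]
        _ < 1 := by rwa [mul_one]
    have hzt : 0 ≤ 1 + z * t := by
      have := neg_abs_le (z * t)
      linarith
    have e1 : c * t + a₁ - a₁ = c * t := by ring
    have e2 : a₂ - (c * t + a₁) = c * (1 - t) := by rw [hc]; ring
    have e3 : x * (c * t + a₁) + y = p * (1 + z * t) := by
      calc x * (c * t + a₁) + y = p + c * x * t := by rw [hp]; ring
        _ = p * (1 + z * t) := by rw [← hpz]; ring
    simp only [hf]
    rw [e1, e2, e3, Complex.ofReal_mul, Complex.ofReal_mul, Complex.ofReal_mul,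
      Complex.mul_cpow_ofReal_nonneg hc0.le ht0,
      Complex.mul_cpow_ofReal_nonneg hc0.le h1t,
      Complex.mul_cpow_ofReal_nonneg h1.le hzt, hK]
    ring
  rw [hcongr, intervalIntegral.integral_const_mul, core_integral η₁ η₂ η₃ hη₁ hη₂ z hzabs]
  have hgauss : gaussHyper (-η₃) η₁ (η₁ + η₂) ((-z : ℝ) : ℂ)
      = ∑' r : ℕ, (ascPochhammer ℂ r).eval (-η₃) * (ascPochhammer ℂ r).eval η₁
        * ((-z : ℝ) : ℂ) ^ r
        / ((ascPochhammer ℂ r).eval (η₁ + η₂) * (r.factorial : ℂ)) := rfl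
  rw [← hgauss]
  have hcne : ((c : ℝ) : ℂ) ≠ 0 := Complex.ofReal_ne_zero.mpr hc0.ne'
  have hcpow : ((c : ℝ) : ℂ) * ((c : ℝ) : ℂ) ^ (η₁ - 1) * ((c : ℝ) : ℂ) ^ (η₂ - 1)
      = ((c : ℝ) : ℂ) ^ (η₁ + η₂ - 1) := by
    rw [show η₁ + η₂ - 1 = 1 + (η₁ - 1) + (η₂ - 1) by ring,
      Complex.cpow_add _ _ hcne, Complex.cpow_add _ _ hcne, Complex.cpow_one]
  rw [Complex.real_smul]
  rw [← hcpow]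
  ring
end

section
/- Let n ≥ 1 be an integer, let η₁, η₂ ∈ ℂ with Re(η₁) > 0 and Re(η₂) > 0, let β₁,…,β_n ∈ ℂ, and let z₁,…,z_n ∈ ℂ with max{|z₁|,…,|z_n|} < 1. Then ∫₀¹ u^{η₁−1} (1−u)^{η₂−1} ∏_{i=1}^n (1−z_i u)^{−β_i} du = B(η₁, η₂) · F_D^{(n)}(η₁, β₁,…,β_n; η₁+η₂; z₁,…,z_n), where F_D^{(n)}(a, b₁,…,b_n; c; x₁,…,x_n) = Σ_{r₁,…,r_n ≥ 0} (a)_{r₁+⋯+r_n} ∏_{i=1}^n (b_i)_{r_i} x_i^{r_i} / ((c)_{r₁+⋯+r_n} ∏_{i=1}^n r_i!) is Lauricella's hypergeometric function of n variables. -/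
open Complex Polynomial MeasureTheory

section helpers

lemma derivOnBall (s : ℂ) {w : ℂ} (hw : ‖w‖ < 1) :
    HasDerivAt (fun w => (1 - w) ^ (-s)) ((-s) * (1 - w) ^ (-s - 1) * (-1)) w := by
  have h1 : (1 - w) ∈ slitPlane := by
    left
    simp only [sub_re, one_re]
    have h2 : w.re < 1 :=
      lt_of_le_of_lt (le_trans (le_abs_self _) (Complex.abs_re_le_norm w)) hw
    linarith
  exact ((hasDerivAt_id w).const_sub 1).cpow_const h1

lemma iteratedDerivEq (s : ℂ) (n : ℕ) :
    Set.EqOn (iteratedDeriv n (fun w => (1 - w) ^ (-s)))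
      (fun w => (ascPochhammer ℂ n).eval s * (1 - w) ^ (-s - n)) (Metric.ball 0 1) := by
  induction n with
  | zero => intro w hw; simp
  | succ n ih =>
    intro w hw
    rw [iteratedDeriv_succ]
    have hww : ‖w‖ < 1 := by simpa [Metric.mem_ball] using hw
    have heq : iteratedDeriv n (fun w => (1 - w) ^ (-s)) =ᶠ[nhds w]
        (fun w => (ascPochhammer ℂ n).eval s * (1 - w) ^ (-s - n)) := by
      filter_upwards [Metric.isOpen_ball.mem_nhds hw] using ih
    rw [heq.deriv_eq]
    have hd : HasDerivAt (fun w => (1 - w) ^ (-(s + n)))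
        ((-(s+n)) * (1 - w) ^ (-(s+n) - 1) * (-1)) w := derivOnBall (s + n) hww
    have : HasDerivAt (fun w => (ascPochhammer ℂ n).eval s * (1 - w) ^ (-s - n))
        ((ascPochhammer ℂ n).eval s * ((-(s+n)) * (1 - w) ^ (-(s+n) - 1) * (-1))) w := by
      have h2 : -s - (n:ℂ) = -(s + n) := by ring
      rw [h2]
      exact hd.const_mul _
    rw [this.deriv]
    rw [ascPochhammer_succ_eval]
    push_cast
    ring_nf

lemma binomialHasSum (s : ℂ) {w : ℂ} (hw : ‖w‖ < 1) :
    HasSum (fun r : ℕ => (ascPochhammer ℂ r).eval s * w ^ r / (r.factorial : ℂ)) ((1 - w) ^ (-s)) := by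
  have hdiff : DifferentiableOn ℂ (fun w : ℂ => (1 - w) ^ (-s)) (Metric.ball (0:ℂ) 1) := by
    intro x hx
    exact (derivOnBall s (by simpa [Metric.mem_ball] using hx)).differentiableAt.differentiableWithinAt
  have hmem : w ∈ Metric.ball (0:ℂ) 1 := by simpa [Metric.mem_ball] using hw
  have H := Complex.hasSum_taylorSeries_on_ball hdiff hmem
  have h0 : (0:ℂ) ∈ Metric.ball (0:ℂ) 1 := by simp
  have hfun : (fun n : ℕ => ((n.factorial : ℂ))⁻¹ • (w - 0) ^ n • iteratedDeriv n (fun w => (1 - w) ^ (-s)) 0)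
      = fun r : ℕ => (ascPochhammer ℂ r).eval s * w ^ r / (r.factorial : ℂ) := by
    funext n
    rw [iteratedDerivEq s n h0]
    simp only [sub_zero, smul_eq_mul, Complex.one_cpow]
    ring
  rw [hfun] at H
  exact H

lemma ascPochhammer_eval_ofReal (x : ℝ) (n : ℕ) :
    (((ascPochhammer ℝ n).eval x : ℝ) : ℂ) = (ascPochhammer ℂ n).eval (x:ℂ) := by
  induction n with
  | zero => simp
  | succ n ih => rw [ascPochhammer_succ_eval, ascPochhammer_succ_eval]; push_cast [ih]; ring

lemma ascPochhammer_eval_nonneg {x : ℝ} (hx : 0 ≤ x) (n : ℕ) :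
    0 ≤ (ascPochhammer ℝ n).eval x := by
  induction n with
  | zero => simp
  | succ n ih =>
    rw [ascPochhammer_succ_eval]
    positivity

lemma norm_ascPochhammer_le (s : ℂ) (n : ℕ) :
    ‖(ascPochhammer ℂ n).eval s‖ ≤ (ascPochhammer ℝ n).eval ‖s‖ := by
  induction n with
  | zero => simp
  | succ n ih =>
    rw [ascPochhammer_succ_eval, ascPochhammer_succ_eval, norm_mul]
    apply mul_le_mul ih ?_ (norm_nonneg _) (ascPochhammer_eval_nonneg (norm_nonneg s) n)
    calc ‖s + (n:ℂ)‖ ≤ ‖s‖ + ‖(n:ℂ)‖ := norm_add_le _ _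
    _ = ‖s‖ + n := by rw [Complex.norm_natCast]

lemma binomialNormSummable (s : ℂ) {w : ℂ} (hw : ‖w‖ < 1) :
    Summable (fun r : ℕ => ‖(ascPochhammer ℂ r).eval s * w ^ r / (r.factorial : ℂ)‖) := by
  have hw' : ‖((‖w‖ : ℝ) : ℂ)‖ < 1 := by
    rwa [Complex.norm_real, Real.norm_of_nonneg (norm_nonneg w)]
  have h1 := (binomialHasSum ((‖s‖ : ℝ) : ℂ) hw').summable
  have h2 : Summable (fun r : ℕ => (ascPochhammer ℝ r).eval ‖s‖ * ‖w‖ ^ r / (r.factorial : ℝ)) := by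
    have h3 : ∀ r : ℕ, ((((ascPochhammer ℝ r).eval ‖s‖ * ‖w‖ ^ r / (r.factorial : ℝ)) : ℝ) : ℂ)
        = (ascPochhammer ℂ r).eval ((‖s‖ : ℝ) : ℂ) * ((‖w‖ : ℝ) : ℂ) ^ r / (r.factorial : ℂ) := by
      intro r
      push_cast [ascPochhammer_eval_ofReal]
      ring
    have h5 := h1.map Complex.reAddGroupHom Complex.continuous_re
    refine h5.congr fun r => ?_
    show ((ascPochhammer ℂ r).eval ((‖s‖ : ℝ) : ℂ) * ((‖w‖ : ℝ) : ℂ) ^ r / (r.factorial : ℂ)).re = _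
    rw [← h3 r, Complex.ofReal_re]
  refine h2.of_nonneg_of_le (fun r => norm_nonneg _) (fun r => ?_)
  rw [norm_div, norm_mul, norm_pow, Complex.norm_natCast]
  rw [div_le_div_iff_of_pos_right (by positivity)]
  exact mul_le_mul_of_nonneg_right (norm_ascPochhammer_le s r) (pow_nonneg (norm_nonneg w) r)

lemma pi_summable_norm {n : ℕ} (f : Fin n → ℕ → ℂ)
    (hs : ∀ i, Summable fun k => ‖f i k‖) :
    Summable (fun r : Fin n → ℕ => ‖∏ i, f i (r i)‖) := by
  induction n with
  | zero => exact .of_finite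
  | succ n ih =>
    have h0 := hs 0
    have hI := ih (fun i => f i.succ) (fun i => hs i.succ)
    have hmul := h0.mul_norm hI
    have := (Fin.consEquiv fun _ : Fin (n+1) => ℕ).symm.summable_iff.2 hmul
    refine this.congr fun r => ?_
    simp only [Function.comp, Fin.consEquiv_symm_apply, Fin.tail]
    rw [Fin.prod_univ_succ]

lemma pi_hasSum_prod {n : ℕ} (f : Fin n → ℕ → ℂ) (a : Fin n → ℂ)
    (hs : ∀ i, Summable fun k => ‖f i k‖) (hf : ∀ i, HasSum (f i) (a i)) :
    HasSum (fun r : Fin n → ℕ => ∏ i, f i (r i)) (∏ i, a i) := by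
  induction n with
  | zero =>
    have : ∀ r : Fin 0 → ℕ, (∏ i, f i (r i)) = 1 := by intro r; simp
    simp only [this, Finset.univ_eq_empty, Finset.prod_empty]
    have hu : ∀ b' : Fin 0 → ℕ, b' ≠ (fun _ => 0) → (1:ℂ) = 0 := by
      intro b' hb'; exact absurd (Subsingleton.elim b' _) hb'
    simpa using hasSum_single (f := fun _ : Fin 0 → ℕ => (1:ℂ)) (fun _ => 0) hu
  | succ n ih =>
    have hI := ih (fun i => f i.succ) (fun i => a i.succ) (fun i => hs i.succ) (fun i => hf i.succ)
    have hsum : Summable (fun p : ℕ × (Fin n → ℕ) => f 0 p.1 * ∏ i, f i.succ (p.2 i)) := by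
      refine Summable.of_norm ?_
      have := (hs 0).mul_norm (pi_summable_norm (fun i => f i.succ) (fun i => hs i.succ))
      exact this.congr fun p => by rw [norm_mul]
    have hmul := (hf 0).mul hI hsum
    have := (Fin.consEquiv fun _ : Fin (n+1) => ℕ).symm.hasSum_iff.2 hmul
    rw [Fin.prod_univ_succ (f := a)]
    refine HasSum.congr_fun this fun r => ?_
    simp only [Function.comp, Fin.consEquiv_symm_apply, Fin.tail]
    rw [Fin.prod_univ_succ]

lemma ascPochhammer_ne_zero_of_re_pos {s : ℂ} (hs : 0 < s.re) (R : ℕ) :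
    (ascPochhammer ℂ R).eval s ≠ 0 := by
  rw [Ne, ascPochhammer_eval_eq_zero_iff]
  rintro ⟨k, -, hk⟩
  have : ((k:ℂ)).re = (-s).re := by rw [hk]
  simp only [Complex.natCast_re, Complex.neg_re] at this
  have : (0:ℝ) ≤ (k:ℝ) := Nat.cast_nonneg k
  linarith [Nat.cast_nonneg (α := ℝ) k, hs, show ((k:ℝ)) = -s.re by exact_mod_cast ‹((k:ℂ)).re = (-s).re›]

lemma Gamma_add_nat {s : ℂ} (hs : 0 < s.re) (R : ℕ) :
    Complex.Gamma (s + R) = Complex.Gamma s * (ascPochhammer ℂ R).eval s := by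
  induction R with
  | zero => simp
  | succ R ih =>
    have hne : s + R ≠ 0 := by
      intro h
      have : (s + (R:ℂ)).re = 0 := by rw [h]; simp
      simp only [Complex.add_re, Complex.natCast_re] at this
      linarith [Nat.cast_nonneg (α := ℝ) R]
    have : s + ((R:ℕ)+1 : ℕ) = (s + R) + 1 := by push_cast; ring
    rw [this, Complex.Gamma_add_one _ hne, ih, ascPochhammer_succ_eval]
    ring

lemma betaIntegral_shift {η₁ η₂ : ℂ} (h1 : 0 < η₁.re) (h2 : 0 < η₂.re) (R : ℕ) :
    Complex.betaIntegral (η₁ + R) η₂ = Complex.betaIntegral η₁ η₂ *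
      ((ascPochhammer ℂ R).eval η₁ / (ascPochhammer ℂ R).eval (η₁ + η₂)) := by
  have hc : 0 < (η₁ + η₂).re := by simp only [Complex.add_re]; linarith
  have h1R : 0 < (η₁ + (R:ℂ)).re := by
    simp only [Complex.add_re, Complex.natCast_re]; linarith [Nat.cast_nonneg (α := ℝ) R]
  have e1 := Complex.Gamma_mul_Gamma_eq_betaIntegral h1R h2
  have e2 := Complex.Gamma_mul_Gamma_eq_betaIntegral h1 h2
  rw [Gamma_add_nat h1 R] at e1
  have hrw : η₁ + (R:ℂ) + η₂ = (η₁ + η₂) + (R:ℂ) := by ring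
  rw [hrw, Gamma_add_nat hc R] at e1
  have hΓc : Complex.Gamma (η₁ + η₂) ≠ 0 := Complex.Gamma_ne_zero_of_re_pos hc
  have hP₂ : (ascPochhammer ℂ R).eval (η₁ + η₂) ≠ 0 := ascPochhammer_ne_zero_of_re_pos hc R
  have k1 : Complex.Gamma (η₁+η₂) * ((ascPochhammer ℂ R).eval (η₁+η₂) * Complex.betaIntegral (η₁ + R) η₂)
      = Complex.Gamma (η₁+η₂) * (Complex.betaIntegral η₁ η₂ * (ascPochhammer ℂ R).eval η₁) := by
    linear_combination (-1 : ℂ) * e1 + (ascPochhammer ℂ R).eval η₁ * e2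
  have k2 := mul_left_cancel₀ hΓc k1
  rw [mul_div_assoc', eq_div_iff hP₂]
  linear_combination k2

end helpers

/-- Lauricella's hypergeometric function `F_D^{(n)}(a, b₁,…,bₙ; c; x₁,…,xₙ)`. -/
noncomputable def lauricellaFD (n : ℕ) (a : ℂ) (b : Fin n → ℂ) (c : ℂ) (x : Fin n → ℂ) : ℂ :=
  ∑' r : Fin n → ℕ,
    (ascPochhammer ℂ (∑ i, r i)).eval a
      * (∏ i, (ascPochhammer ℂ (r i)).eval (b i) * x i ^ (r i))
      / ((ascPochhammer ℂ (∑ i, r i)).eval c * ∏ i, ((r i).factorial : ℂ))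

/-- Euler-type integral representation of Lauricella's function `F_D^{(n)}`. -/
theorem integral_lauricellaFD (n : ℕ) (hn : 1 ≤ n)
    (η₁ η₂ : ℂ) (hη₁ : 0 < η₁.re) (hη₂ : 0 < η₂.re)
    (β z : Fin n → ℂ) (hz : ∀ i, ‖z i‖ < 1) :
    (∫ u in (0:ℝ)..1, (u : ℂ) ^ (η₁ - 1) * (1 - (u : ℂ)) ^ (η₂ - 1)
        * ∏ i, (1 - z i * (u : ℂ)) ^ (-(β i)))
    = (Complex.Gamma η₁ * Complex.Gamma η₂ / Complex.Gamma (η₁ + η₂))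
      * lauricellaFD n η₁ β (η₁ + η₂) z := by
  have hz' : ∀ i, ‖z i‖ < 1 := fun i => by exact hz i
  set F : (Fin n → ℕ) → ℝ → ℂ := fun r u =>
    (u : ℂ) ^ (η₁ - 1) * (1 - (u : ℂ)) ^ (η₂ - 1)
      * ∏ i, ((ascPochhammer ℂ (r i)).eval (β i) * (z i * (u:ℂ)) ^ (r i)
          / (((r i).factorial : ℂ))) with hF
  -- pointwise expansion
  have hzu : ∀ (u : ℝ), u ∈ Set.Ioc (0:ℝ) 1 → ∀ i, ‖z i * (u:ℂ)‖ < 1 := by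
    intro u hu i
    rw [norm_mul, Complex.norm_real, Real.norm_of_nonneg hu.1.le]
    calc ‖z i‖ * u ≤ ‖z i‖ * 1 := by
          exact mul_le_mul_of_nonneg_left hu.2 (norm_nonneg _)
    _ < 1 := by rw [mul_one]; exact hz' i
  have hpt : ∀ (u : ℝ), u ∈ Set.Ioc (0:ℝ) 1 →
      HasSum (fun r => F r u)
        ((u : ℂ) ^ (η₁ - 1) * (1 - (u : ℂ)) ^ (η₂ - 1)
          * ∏ i, (1 - z i * (u:ℂ)) ^ (-(β i))) := by
    intro u hu
    have hprod := pi_hasSum_prod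
      (fun i k => (ascPochhammer ℂ k).eval (β i) * (z i * (u:ℂ)) ^ k / (k.factorial : ℂ))
      (fun i => (1 - z i * (u:ℂ)) ^ (-(β i)))
      (fun i => binomialNormSummable (β i) (hzu u hu i))
      (fun i => binomialHasSum (β i) (hzu u hu i))
    exact hprod.mul_left _
  -- integrability of each term
  have hbeta := Complex.betaIntegral_convergent hη₁ hη₂
  have hInt : ∀ r, IntegrableOn (F r) (Set.Ioc (0:ℝ) 1) volume := by
    intro r
    have hcont : ContinuousOn (fun u : ℝ =>
        ∏ i, ((ascPochhammer ℂ (r i)).eval (β i) * (z i * (u:ℂ)) ^ (r i)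
          / (((r i).factorial : ℂ)))) (Set.uIcc (0:ℝ) 1) := by
      apply Continuous.continuousOn
      apply continuous_finset_prod
      intro i _
      exact ((continuous_const.mul
        ((continuous_const.mul Complex.continuous_ofReal).pow (r i))).div_const _)
    have := hbeta.mul_continuousOn hcont
    exact (intervalIntegrable_iff_integrableOn_Ioc_of_le zero_le_one).1 this
  -- the real majorant
  set G : ℝ → ℂ := fun u => (u : ℂ) ^ ((η₁.re : ℂ) - 1) * (1 - (u : ℂ)) ^ ((η₂.re : ℂ) - 1)
    with hG
  have hGint : IntegrableOn G (Set.Ioc (0:ℝ) 1) volume := by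
    have h := Complex.betaIntegral_convergent (u := (η₁.re : ℂ)) (v := (η₂.re : ℂ))
      (by simpa using hη₁) (by simpa using hη₂)
    exact (intervalIntegrable_iff_integrableOn_Ioc_of_le zero_le_one).1 h
  set w' : (Fin n → ℕ) → ℝ := fun r =>
    ∏ i, ‖(ascPochhammer ℂ (r i)).eval (β i) * z i ^ (r i) / (((r i).factorial : ℂ))‖ with hw'def
  have hw'sum : Summable w' := by
    have := pi_summable_norm
      (fun i k => (ascPochhammer ℂ k).eval (β i) * z i ^ k / (k.factorial : ℂ))
      (fun i => binomialNormSummable (β i) (hz' i))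
    refine this.congr fun r => ?_
    rw [norm_prod]
  -- pointwise domination
  have hdom : ∀ r, ∀ u ∈ Set.Ioc (0:ℝ) 1, ‖F r u‖ ≤ ‖G u‖ * w' r := by
    intro r u hu
    have hu0 : (0:ℝ) < u := hu.1
    simp only [hF, hG, norm_mul]
    have e1 : ‖(u:ℂ) ^ (η₁ - 1)‖ = ‖(u:ℂ) ^ ((η₁.re : ℂ) - 1)‖ := by
      rw [Complex.norm_cpow_eq_rpow_re_of_pos hu0, Complex.norm_cpow_eq_rpow_re_of_pos hu0]
      norm_num
    have e2 : ‖(1 - (u:ℂ)) ^ (η₂ - 1)‖ ≤ ‖(1 - (u:ℂ)) ^ ((η₂.re : ℂ) - 1)‖ := by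
      rcases lt_or_eq_of_le hu.2 with h | h
      · have h1u : (0:ℝ) < 1 - u := by linarith
        have : ((1:ℂ) - (u:ℂ)) = ((1 - u : ℝ) : ℂ) := by push_cast; ring
        rw [this, Complex.norm_cpow_eq_rpow_re_of_pos h1u, Complex.norm_cpow_eq_rpow_re_of_pos h1u]
        norm_num
      · subst h
        simp only [Complex.ofReal_one, sub_self]
        by_cases hη : η₂ - 1 = 0
        · have hη2 : η₂ = 1 := by
            have := sub_eq_zero.mp hη; exact this
          rw [hη, hη2]
          norm_num
        · rw [Complex.zero_cpow hη]
          simp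
    have e3 : ‖∏ i, ((ascPochhammer ℂ (r i)).eval (β i) * (z i * (u:ℂ)) ^ (r i)
        / (((r i).factorial : ℂ)))‖ ≤ w' r := by
      rw [norm_prod, hw'def]
      apply Finset.prod_le_prod (fun i _ => norm_nonneg _)
      intro i _
      rw [norm_div, norm_div, norm_mul, norm_mul, norm_pow, norm_pow, norm_mul]
      rw [div_le_div_iff_of_pos_right (by
        rw [Complex.norm_natCast]
        exact_mod_cast Nat.factorial_pos _)]
      apply mul_le_mul_of_nonneg_left ?_ (norm_nonneg _)
      apply pow_le_pow_left₀ (by positivity) ?_ _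
      rw [Complex.norm_real, Real.norm_of_nonneg hu0.le]
      nlinarith [norm_nonneg (z i), hu.2, hu0.le]
    exact mul_le_mul (mul_le_mul e1.le e2 (norm_nonneg _) (norm_nonneg _)) e3
      (norm_nonneg _) (by positivity)
  -- summability of the integrals of norms
  have hintnorm : ∀ r, (∫ u in Set.Ioc (0:ℝ) 1, ‖F r u‖)
      ≤ (∫ u in Set.Ioc (0:ℝ) 1, ‖G u‖) * w' r := by
    intro r
    have h1 : (∫ u in Set.Ioc (0:ℝ) 1, ‖F r u‖) ≤ ∫ u in Set.Ioc (0:ℝ) 1, ‖G u‖ * w' r := by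
      apply setIntegral_mono_on ((hInt r).norm) (hGint.norm.mul_const _) measurableSet_Ioc
      intro u hu
      exact hdom r u hu
    rwa [integral_mul_const] at h1
  have hsumint : Summable (fun r => ∫ u in Set.Ioc (0:ℝ) 1, ‖F r u‖) := by
    apply Summable.of_nonneg_of_le (fun r => integral_nonneg (fun u => norm_nonneg _)) hintnorm
    exact hw'sum.mul_left _
  have hkey := MeasureTheory.integral_tsum_of_summable_integral_norm
    (μ := volume.restrict (Set.Ioc (0:ℝ) 1)) hInt hsumint
  rw [intervalIntegral.integral_of_le zero_le_one]
  have hcongr : (∫ u in Set.Ioc (0:ℝ) 1, ((u : ℂ) ^ (η₁ - 1) * (1 - (u : ℂ)) ^ (η₂ - 1)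
        * ∏ i, (1 - z i * (u:ℂ)) ^ (-(β i))))
      = ∫ u in Set.Ioc (0:ℝ) 1, (∑' r, F r u) := by
    apply setIntegral_congr_fun measurableSet_Ioc
    intro u hu
    exact ((hpt u hu).tsum_eq).symm
  rw [hcongr, ← hkey]
  -- termwise integral
  have hterm : ∀ r : Fin n → ℕ, (∫ u in Set.Ioc (0:ℝ) 1, F r u)
      = (∏ i, ((ascPochhammer ℂ (r i)).eval (β i) * z i ^ (r i) / ((r i).factorial : ℂ)))
        * Complex.betaIntegral (η₁ + (∑ i, r i : ℕ)) η₂ := by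
    intro r
    have heq : Set.EqOn (F r) (fun u : ℝ =>
        (∏ i, ((ascPochhammer ℂ (r i)).eval (β i) * z i ^ (r i) / ((r i).factorial : ℂ)))
          * ((u:ℂ) ^ (η₁ + (∑ i, r i : ℕ) - 1) * (1 - (u:ℂ)) ^ (η₂ - 1)))
        (Set.Ioc (0:ℝ) 1) := by
      intro u hu
      have hu0 : (u:ℂ) ≠ 0 := by
        simp only [ne_eq, Complex.ofReal_eq_zero]
        exact ne_of_gt hu.1
      simp only [hF]
      have hsplit : ∀ i : Fin n, (ascPochhammer ℂ (r i)).eval (β i) * (z i * (u:ℂ)) ^ (r i)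
          / ((r i).factorial : ℂ)
          = ((ascPochhammer ℂ (r i)).eval (β i) * z i ^ (r i) / ((r i).factorial : ℂ))
            * (u:ℂ) ^ (r i) := by
        intro i
        rw [mul_pow]
        ring
      rw [Finset.prod_congr rfl (fun i _ => hsplit i), Finset.prod_mul_distrib,
        Finset.prod_pow_eq_pow_sum]
      have hpow : (u:ℂ) ^ (η₁ - 1) * (u:ℂ) ^ (∑ i, r i)
          = (u:ℂ) ^ (η₁ + (∑ i, r i : ℕ) - 1) := by
        rw [← Complex.cpow_natCast (u:ℂ) (∑ i, r i), ← Complex.cpow_add _ _ hu0]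
        congr 1
        ring
      calc (u:ℂ) ^ (η₁ - 1) * (1 - (u:ℂ)) ^ (η₂ - 1)
            * ((∏ i, ((ascPochhammer ℂ (r i)).eval (β i) * z i ^ (r i) / ((r i).factorial : ℂ)))
              * (u:ℂ) ^ (∑ i, r i))
          = (∏ i, ((ascPochhammer ℂ (r i)).eval (β i) * z i ^ (r i) / ((r i).factorial : ℂ)))
            * (((u:ℂ) ^ (η₁ - 1) * (u:ℂ) ^ (∑ i, r i)) * (1 - (u:ℂ)) ^ (η₂ - 1)) := by ring
      _ = _ := by rw [hpow]
    rw [setIntegral_congr_fun measurableSet_Ioc heq, MeasureTheory.integral_const_mul]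
    congr 1
    rw [Complex.betaIntegral, intervalIntegral.integral_of_le zero_le_one]
  -- assemble
  have hc : 0 < (η₁ + η₂).re := by
    simp only [Complex.add_re]
    linarith
  have hΓc : Complex.Gamma (η₁ + η₂) ≠ 0 := Complex.Gamma_ne_zero_of_re_pos hc
  have hBeq : Complex.Gamma η₁ * Complex.Gamma η₂ / Complex.Gamma (η₁ + η₂)
      = Complex.betaIntegral η₁ η₂ := by
    rw [div_eq_iff hΓc, Complex.Gamma_mul_Gamma_eq_betaIntegral hη₁ hη₂]
    ring
  rw [hBeq, lauricellaFD, ← tsum_mul_left]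
  apply tsum_congr
  intro r
  rw [hterm r, betaIntegral_shift hη₁ hη₂ (∑ i, r i), Finset.prod_div_distrib]
  have hP2 : (ascPochhammer ℂ (∑ i, r i)).eval (η₁ + η₂) ≠ 0 :=
    ascPochhammer_ne_zero_of_re_pos hc _
  have hfac : (∏ i, ((r i).factorial : ℂ)) ≠ 0 := by
    rw [Finset.prod_ne_zero_iff]
    intro i _
    exact_mod_cast (r i).factorial_ne_zero
  field_simp
end
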